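/- arXiv:1005.4877 — 2 statements merged into one kernel-verified Lean document; each statement's English description precedes it below -/
import Mathlib

section
/- Every monotonic SCF that satisfies the strong superset property (SSP) satisfies set-monotonicity, and hence is weakly R̂-group-strategyproof. -/
open scoped Classical

variable {U : Type*}

/-- A relation is complete (total). -/
def Complete (R : U → U → Prop) : Prop := ∀ a b : U, R a b ∨ R b a

/-- Strict part of a preference relation. -/
def StrictPref (R : U → U → Prop) (a b : U) : Prop := R a b ∧ ¬ R b a

/-- Indifference part of a preference relation. -/
def Indiff (R : U → U → Prop) (a b : U) : Prop := R a b ∧ R b a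

/-- Kelly's weak set extension: every element of `X` is weakly preferred to every element of `Y`. -/
def KellyR (R : U → U → Prop) (X Y : Finset U) : Prop := ∀ x ∈ X, ∀ y ∈ Y, R x y

/-- Kelly's strict set extension. -/
def KellyP (R : U → U → Prop) (X Y : Finset U) : Prop :=
  KellyR R X Y ∧ ∃ x ∈ X, ∃ y ∈ Y, StrictPref R x y

/-- A social choice function: for any number of voters, maps a preference profile and a
feasible set to a nonempty subset of it, depending only on preferences restricted to it. -/
structure SCF (U : Type*) where
  choice : ∀ n : ℕ, (Fin n → U → U → Prop) → Finset U → Finset U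
  choice_subset : ∀ n R A, choice n R A ⊆ A
  choice_nonempty : ∀ n (R : Fin n → U → U → Prop) (A : Finset U),
    A.Nonempty → (choice n R A).Nonempty
  iia : ∀ n (R R' : Fin n → U → U → Prop) (A : Finset U),
    (∀ i, ∀ a ∈ A, ∀ b ∈ A, R i a b ↔ R' i a b) → choice n R A = choice n R' A

/-- `R'` is obtained from `R` by weakly strengthening `a` against `b`:
either `R' = R`, or `R' = R ∪ {(a,b)}`, or `R' = (R \ {(b,a)}) ∪ {(a,b)}`. -/
def weaklyStrengthens (R R' : U → U → Prop) (a b : U) : Prop :=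
  (∀ x y, R' x y ↔ R x y) ∨
  (∀ x y, R' x y ↔ (R x y ∨ (x = a ∧ y = b))) ∨
  (∀ x y, R' x y ↔ ((R x y ∧ ¬(x = b ∧ y = a)) ∨ (x = a ∧ y = b)))

/-- Set-monotonicity: the choice set is invariant under weakening unchosen alternatives. -/
def SetMonotone (f : SCF U) : Prop :=
  ∀ (n : ℕ) (R R' : Fin n → U → U → Prop) (A : Finset U) (i : Fin n) (a b : U),
    (∀ j, Complete (R j)) → (∀ j, Complete (R' j)) → A.Nonempty →
    a ∈ A → b ∈ A → b ∉ f.choice n R A →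
    (∀ j, j ≠ i → R' j = R j) →
    weaklyStrengthens (R i) (R' i) a b →
    f.choice n R' A = f.choice n R A

/-- Strong monotonicity (Maskin-style). -/
def StrongMonotone (f : SCF U) : Prop :=
  ∀ (n : ℕ) (R R' : Fin n → U → U → Prop) (A : Finset U) (i : Fin n) (a b x : U),
    (∀ j, Complete (R j)) → (∀ j, Complete (R' j)) → A.Nonempty →
    a ∈ A → b ∈ A → b ≠ x → x ∈ f.choice n R A →
    (∀ j, j ≠ i → R' j = R j) →
    weaklyStrengthens (R i) (R' i) a b →
    x ∈ f.choice n R' A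

/-- Monotonicity: a chosen alternative stays chosen when it is weakly strengthened. -/
def MonotoneSCF (f : SCF U) : Prop :=
  ∀ (n : ℕ) (R R' : Fin n → U → U → Prop) (A : Finset U) (i : Fin n) (a b : U),
    (∀ j, Complete (R j)) → (∀ j, Complete (R' j)) → A.Nonempty →
    a ∈ A → b ∈ A → a ∈ f.choice n R A →
    (∀ j, j ≠ i → R' j = R j) →
    weaklyStrengthens (R i) (R' i) a b →
    a ∈ f.choice n R' A

/-- Independence of unchosen alternatives. -/
def IUA (f : SCF U) : Prop :=
  ∀ (n : ℕ) (R R' : Fin n → U → U → Prop) (A : Finset U),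
    (∀ j, Complete (R j)) → (∀ j, Complete (R' j)) → A.Nonempty →
    (∀ i : Fin n, ∀ a ∈ f.choice n R A, ∀ b ∈ A,
      (R i a b ↔ R' i a b) ∧ (R i b a ↔ R' i b a)) →
    f.choice n R' A = f.choice n R A

/-- Strong superset property: choice sets are invariant under removal of unchosen alternatives. -/
def SSP (f : SCF U) : Prop :=
  ∀ (n : ℕ) (R : Fin n → U → U → Prop) (A B : Finset U),
    (∀ j, Complete (R j)) → A.Nonempty →
    f.choice n R A ⊆ B → B ⊆ A →
    f.choice n R B = f.choice n R A

/-- Weak R̂-group-strategyproofness: no group can obtain a Kelly-weakly-preferred different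
choice set by misreporting only their strict preferences. -/
def WeakKellyGroupSP (f : SCF U) : Prop :=
  ¬ ∃ (n : ℕ) (R R' : Fin n → U → U → Prop) (A : Finset U) (G : Finset (Fin n)),
    (∀ j, Complete (R j)) ∧ (∀ j, Complete (R' j)) ∧ A.Nonempty ∧
    (∀ i, i ∉ G → R' i = R i) ∧
    (∀ i ∈ G, ∀ a b : U, Indiff (R i) a b → Indiff (R' i) a b) ∧
    f.choice n R' A ≠ f.choice n R A ∧
    (∀ i ∈ G, KellyR (R i) (f.choice n R' A) (f.choice n R A))

/-- Weak R̂-strategyproofness (single manipulator misreporting only strict preferences). -/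
def WeakKellySP (f : SCF U) : Prop :=
  ¬ ∃ (n : ℕ) (R R' : Fin n → U → U → Prop) (A : Finset U) (i : Fin n),
    (∀ j, Complete (R j)) ∧ (∀ j, Complete (R' j)) ∧ A.Nonempty ∧
    (∀ j, j ≠ i → R' j = R j) ∧
    (∀ a b : U, Indiff (R i) a b → Indiff (R' i) a b) ∧
    f.choice n R' A ≠ f.choice n R A ∧
    KellyR (R i) (f.choice n R' A) (f.choice n R A)

/-- Weak P̂-strategyproofness (single manipulator misreporting only strict preferences). -/
def WeakKellyPSP (f : SCF U) : Prop :=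
  ¬ ∃ (n : ℕ) (R R' : Fin n → U → U → Prop) (A : Finset U) (i : Fin n),
    (∀ j, Complete (R j)) ∧ (∀ j, Complete (R' j)) ∧ A.Nonempty ∧
    (∀ j, j ≠ i → R' j = R j) ∧
    (∀ a b : U, Indiff (R i) a b → Indiff (R' i) a b) ∧
    f.choice n R' A ≠ f.choice n R A ∧
    KellyP (R i) (f.choice n R' A) (f.choice n R A)

/-- Net majority margin of `a` against `b`. -/
noncomputable def margin {n : ℕ} (R : Fin n → U → U → Prop) (a b : U) : ℤ :=
  ((Finset.univ.filter fun i => StrictPref (R i) a b).card : ℤ) -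
  ((Finset.univ.filter fun i => StrictPref (R i) b a).card : ℤ)

/-- A pairwise SCF: the outcome depends only on the net pairwise majority margins. -/
def PairwiseSCF (f : SCF U) : Prop :=
  ∀ (n m : ℕ) (R : Fin n → U → U → Prop) (R' : Fin m → U → U → Prop) (A : Finset U),
    (∀ j, Complete (R j)) → (∀ j, Complete (R' j)) →
    (∀ a ∈ A, ∀ b ∈ A, margin R a b = margin R' a b) →
    f.choice n R A = f.choice m R' A

/-- Condorcet winner: beats every other feasible alternative in pairwise majority comparisons. -/
def CondorcetWinner {V : Type*} [Fintype V] (R : V → U → U → Prop) (A : Finset U)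
    (c : U) : Prop :=
  c ∈ A ∧ ∀ b ∈ A, b ≠ c →
    (Finset.univ.filter fun i => R i c b).card > (Finset.univ.filter fun i => R i b c).card

/-- A Condorcet extension uniquely selects the Condorcet winner whenever one exists. -/
def CondorcetExtension (f : SCF U) : Prop :=
  ∀ (n : ℕ) (R : Fin n → U → U → Prop) (A : Finset U) (c : U),
    (∀ j, Complete (R j)) → CondorcetWinner R A c → f.choice n R A = {c}

/-- A resolute SCF always chooses a single alternative. -/
def Resolute (f : SCF U) : Prop :=
  ∀ (n : ℕ) (R : Fin n → U → U → Prop) (A : Finset U),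
    (∀ j, Complete (R j)) → A.Nonempty → (f.choice n R A).card = 1


section AuxProof

/-- Patch `Q` with the values of `Q'` on the (unordered) pair `{u,v}`. -/
noncomputable def auxPatch (Q Q' : U → U → Prop) (u v : U) : U → U → Prop :=
  fun x y => if (x = u ∧ y = v) ∨ (x = v ∧ y = u) then Q' x y else Q x y

lemma auxPatch_pos {Q Q' : U → U → Prop} {u v x y : U}
    (h : (x = u ∧ y = v) ∨ (x = v ∧ y = u)) : auxPatch Q Q' u v x y = Q' x y := by
  unfold auxPatch; rw [if_pos h]

lemma auxPatch_neg {Q Q' : U → U → Prop} {u v x y : U}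
    (h : ¬((x = u ∧ y = v) ∨ (x = v ∧ y = u))) : auxPatch Q Q' u v x y = Q x y := by
  unfold auxPatch; rw [if_neg h]

lemma auxPatch_complete {Q Q' : U → U → Prop} {u v : U}
    (hQ : Complete Q) (hQ' : Complete Q') : Complete (auxPatch Q Q' u v) := by
  intro x y
  by_cases hc : (x = u ∧ y = v) ∨ (x = v ∧ y = u)
  · have hc' : (y = u ∧ x = v) ∨ (y = v ∧ x = u) := by tauto
    rw [auxPatch_pos hc, auxPatch_pos hc']
    exact hQ' x y
  · have hc' : ¬((y = u ∧ x = v) ∨ (y = v ∧ x = u)) := by tauto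
    rw [auxPatch_neg hc, auxPatch_neg hc']
    exact hQ x y

/-- If the target is strict at `(a,b)` and agrees with the source off the pair,
then the target is obtained by strengthening `a` against `b`. -/
lemma aux_strengthenTo {T S : U → U → Prop} {a b : U} (hab : a ≠ b)
    (h1 : S a b) (h2 : ¬ S b a)
    (hoff : ∀ x y, ¬(x = a ∧ y = b) → ¬(x = b ∧ y = a) → (T x y ↔ S x y)) :
    weaklyStrengthens T S a b := by
  refine Or.inr (Or.inr ?_)
  intro x y
  by_cases hxy1 : x = a ∧ y = b
  · obtain ⟨rfl, rfl⟩ := hxy1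
    simp [h1]
  · by_cases hxy2 : x = b ∧ y = a
    · obtain ⟨rfl, rfl⟩ := hxy2
      simp [h2, Ne.symm hab]
    · rw [hoff x y hxy1 hxy2]
      simp [hxy1, hxy2]

/-- If the source is strict at `(b,a)`, the target is complete and agrees with the source
off the pair, then the target is obtained by strengthening `a` against `b`. -/
lemma aux_weakenFrom {T S : U → U → Prop} {a b : U} (hab : a ≠ b)
    (h1 : T b a) (h2 : ¬ T a b) (hS : Complete S)
    (hoff : ∀ x y, ¬(x = a ∧ y = b) → ¬(x = b ∧ y = a) → (T x y ↔ S x y)) :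
    weaklyStrengthens T S a b := by
  by_cases hsab : S a b
  · by_cases hsba : S b a
    · refine Or.inr (Or.inl ?_)
      intro x y
      by_cases hxy1 : x = a ∧ y = b
      · obtain ⟨rfl, rfl⟩ := hxy1
        simp [hsab]
      · by_cases hxy2 : x = b ∧ y = a
        · obtain ⟨rfl, rfl⟩ := hxy2
          simp [hsba, h1]
        · rw [← hoff x y hxy1 hxy2]
          simp [hxy1]
    · exact aux_strengthenTo hab hsab hsba hoff
  · have hsba : S b a := (hS a b).resolve_left hsab
    refine Or.inl ?_
    intro x y
    by_cases hxy1 : x = a ∧ y = b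
    · obtain ⟨rfl, rfl⟩ := hxy1
      simp [hsab, h2]
    · by_cases hxy2 : x = b ∧ y = a
      · obtain ⟨rfl, rfl⟩ := hxy2
        simp [hsba, h1]
      · exact (hoff x y hxy1 hxy2).symm

/-- Strengthening can be reversed (for complete source relations). -/
lemma aux_ws_reverse {R R' : U → U → Prop} {a b : U} (hc : Complete R)
    (h : weaklyStrengthens R R' a b) : weaklyStrengthens R' R b a := by
  have hrefl : ∀ x, R x x := fun x => (hc x x).elim id id
  rcases h with h | h | h
  · exact Or.inl fun x y => (h x y).symm
  · by_cases hab : R a b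
    · refine Or.inl fun x y => ?_
      rw [h x y]
      constructor
      · exact Or.inl
      · rintro (h' | ⟨rfl, rfl⟩)
        exacts [h', hab]
    · have hba : R b a := (hc a b).resolve_left hab
      have hne : a ≠ b := by
        intro e; subst e; exact hab (hrefl a)
      have hne' : ¬ (b = a) := fun e => hne e.symm
      refine Or.inr (Or.inr fun x y => ?_)
      rw [h x y]
      by_cases h1 : x = a ∧ y = b
      · obtain ⟨rfl, rfl⟩ := h1
        simp [hab, hne, hne']
      · by_cases h2 : x = b ∧ y = a
        · obtain ⟨rfl, rfl⟩ := h2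
          simp [hba]
        · simp [h1, h2]
  · by_cases heq : a = b
    · subst heq
      refine Or.inl fun x y => ?_
      rw [h x y]
      by_cases h1 : x = a ∧ y = a
      · obtain ⟨rfl, rfl⟩ := h1
        simp [hrefl]
      · simp [h1]
    · have hne' : ¬ (b = a) := fun e => heq e.symm
      by_cases hba : R b a
      · by_cases hab : R a b
        · refine Or.inr (Or.inl fun x y => ?_)
          rw [h x y]
          by_cases h1 : x = a ∧ y = b
          · obtain ⟨rfl, rfl⟩ := h1
            simp [hab]
          · by_cases h2 : x = b ∧ y = a
            · obtain ⟨rfl, rfl⟩ := h2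
              simp [hba]
            · simp [h1, h2]
        · refine Or.inr (Or.inr fun x y => ?_)
          rw [h x y]
          by_cases h1 : x = a ∧ y = b
          · obtain ⟨rfl, rfl⟩ := h1
            simp [hab, heq, hne']
          · by_cases h2 : x = b ∧ y = a
            · obtain ⟨rfl, rfl⟩ := h2
              simp [hba]
            · simp [h1, h2]
      · have hab : R a b := (hc a b).resolve_right hba
        refine Or.inl fun x y => ?_
        rw [h x y]
        by_cases h1 : x = a ∧ y = b
        · obtain ⟨rfl, rfl⟩ := h1
          simp [hab]
        · by_cases h2 : x = b ∧ y = a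
          · obtain ⟨rfl, rfl⟩ := h2
            simp [hba, heq, hne']
          · simp [h1, h2]

/-- A strengthening of `a` against `b` does not change the relation on pairs avoiding `b`. -/
lemma aux_ws_agree {R R' : U → U → Prop} {a b : U} (h : weaklyStrengthens R R' a b)
    {x y : U} (hx : x ≠ b) (hy : y ≠ b) : (R x y ↔ R' x y) := by
  rcases h with h | h | h
  · exact (h x y).symm
  · rw [h x y]; simp [hy]
  · rw [h x y]; simp [hx, hy]

/-- Chaining single-pair changes through a set-monotone SCF. -/
lemma aux_chain (f : SCF U) (hf : SetMonotone f) (n : ℕ)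
    (Q' : Fin n → U → U → Prop) (hQ'c : ∀ j, Complete (Q' j))
    (A : Finset U) (hA : A.Nonempty) :
    ∀ (N : ℕ) (Q : Fin n → U → U → Prop), (∀ j, Complete (Q j)) →
    (∑ i : Fin n, ((A ×ˢ A).filter fun p => ¬(Q i p.1 p.2 ↔ Q' i p.1 p.2)).card) ≤ N →
    (∀ i u v, u ∈ A → v ∈ A → ¬(Q i u v ↔ Q' i u v) →
      ∃ a b, ((a = u ∧ b = v) ∨ (a = v ∧ b = u)) ∧ b ∉ f.choice n Q A ∧
        (StrictPref (Q' i) a b ∨ StrictPref (Q i) b a)) →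
    f.choice n Q' A = f.choice n Q A := by
  intro N
  induction N with
  | zero =>
    intro Q hQc hle hH
    apply f.iia
    intro i x hx y hy
    have h0 : ((A ×ˢ A).filter fun p => ¬(Q i p.1 p.2 ↔ Q' i p.1 p.2)) = ∅ := by
      apply Finset.card_eq_zero.mp
      have := Finset.sum_eq_zero_iff.mp (Nat.le_zero.mp hle) i (Finset.mem_univ i)
      exact this
    have hnot := Finset.filter_eq_empty_iff.mp h0
      (Finset.mem_product.mpr ⟨hx, hy⟩ : ((x, y) : U × U) ∈ A ×ˢ A)
    exact (not_not.mp hnot).symm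
  | succ N ih =>
    intro Q hQc hle hH
    by_cases hle' : (∑ i : Fin n,
        ((A ×ˢ A).filter fun p => ¬(Q i p.1 p.2 ↔ Q' i p.1 p.2)).card) ≤ N
    · exact ih Q hQc hle' hH
    · have hpos : (∑ i : Fin n,
          ((A ×ˢ A).filter fun p => ¬(Q i p.1 p.2 ↔ Q' i p.1 p.2)).card) ≠ 0 := by
        intro h0; exact hle' (by omega)
      obtain ⟨i, -, hi⟩ := Finset.exists_ne_zero_of_sum_ne_zero hpos
      obtain ⟨⟨u, v⟩, hp⟩ := Finset.card_pos.mp (Nat.pos_of_ne_zero hi)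
      rw [Finset.mem_filter, Finset.mem_product] at hp
      obtain ⟨⟨hu, hv⟩, hdiff⟩ := hp
      obtain ⟨a, b, habuv, hbX, hstr⟩ := hH i u v hu hv hdiff
      have hane : a ≠ b := by
        rcases hstr with ⟨hs1, hs2⟩ | ⟨hs1, hs2⟩ <;> (intro e; subst e; exact hs2 hs1)
      have haA : a ∈ A := by rcases habuv with ⟨rfl, rfl⟩ | ⟨rfl, rfl⟩ <;> assumption
      have hbA : b ∈ A := by rcases habuv with ⟨rfl, rfl⟩ | ⟨rfl, rfl⟩ <;> assumption
      set P : U → U → Prop := auxPatch (Q i) (Q' i) u v with hPdef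
      set Q₁ : Fin n → U → U → Prop := Function.update Q i P with hQ₁def
      have hQ₁i : Q₁ i = P := Function.update_self i P Q
      have hQ₁j : ∀ j, j ≠ i → Q₁ j = Q j := fun j hj => Function.update_of_ne hj P Q
      have hcondiff : ∀ x y : U,
          ((x = u ∧ y = v) ∨ (x = v ∧ y = u)) ↔ ((x = a ∧ y = b) ∨ (x = b ∧ y = a)) := by
        rcases habuv with ⟨rfl, rfl⟩ | ⟨rfl, rfl⟩ <;> (intro x y; tauto)
      have hPoff : ∀ x y, ¬(x = a ∧ y = b) → ¬(x = b ∧ y = a) → (Q i x y ↔ P x y) := by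
        intro x y hx1 hx2
        have hnc : ¬((x = u ∧ y = v) ∨ (x = v ∧ y = u)) := by
          intro hc; rcases (hcondiff x y).mp hc with h | h
          exacts [hx1 h, hx2 h]
        rw [hPdef, auxPatch_neg hnc]
      have hPab : P a b = Q' i a b := by
        rw [hPdef]; exact auxPatch_pos ((hcondiff a b).mpr (Or.inl ⟨rfl, rfl⟩))
      have hPba : P b a = Q' i b a := by
        rw [hPdef]; exact auxPatch_pos ((hcondiff b a).mpr (Or.inr ⟨rfl, rfl⟩))
      have hQ₁c : ∀ j, Complete (Q₁ j) := by
        intro j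
        by_cases hj : j = i
        · subst hj; rw [hQ₁i, hPdef]; exact auxPatch_complete (hQc j) (hQ'c j)
        · rw [hQ₁j j hj]; exact hQc j
      have hws : weaklyStrengthens (Q i) (Q₁ i) a b := by
        rw [hQ₁i]
        rcases hstr with ⟨hs1, hs2⟩ | ⟨hs1, hs2⟩
        · refine aux_strengthenTo hane ?_ ?_ hPoff
          · rw [hPab]; exact hs1
          · rw [hPba]; exact hs2
        · refine aux_weakenFrom hane hs1 hs2 ?_ hPoff
          rw [hPdef]; exact auxPatch_complete (hQc i) (hQ'c i)
      have hch : f.choice n Q₁ A = f.choice n Q A :=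
        hf n Q Q₁ A i a b hQc hQ₁c hA haA hbA hbX hQ₁j hws
      have hsubfilter :
          ((A ×ˢ A).filter fun p => ¬(Q₁ i p.1 p.2 ↔ Q' i p.1 p.2)) ⊆
          ((A ×ˢ A).filter fun p => ¬(Q i p.1 p.2 ↔ Q' i p.1 p.2)) := by
        intro p hp'
        rw [Finset.mem_filter] at hp' ⊢
        refine ⟨hp'.1, ?_⟩
        intro hiff
        apply hp'.2
        by_cases hcnd : (p.1 = u ∧ p.2 = v) ∨ (p.1 = v ∧ p.2 = u)
        · rw [hQ₁i, hPdef, auxPatch_pos hcnd]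
        · rw [hQ₁i, hPdef, auxPatch_neg hcnd]; exact hiff
      have hmemuv : ((u, v) : U × U) ∈
          ((A ×ˢ A).filter fun p => ¬(Q i p.1 p.2 ↔ Q' i p.1 p.2)) :=
        Finset.mem_filter.mpr ⟨Finset.mem_product.mpr ⟨hu, hv⟩, hdiff⟩
      have hnotmem : ((u, v) : U × U) ∉
          ((A ×ˢ A).filter fun p => ¬(Q₁ i p.1 p.2 ↔ Q' i p.1 p.2)) := by
        rw [Finset.mem_filter]
        rintro ⟨-, hd⟩
        apply hd
        rw [hQ₁i, hPdef, auxPatch_pos (Or.inl ⟨rfl, rfl⟩)]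
      have hlt : (∑ j : Fin n,
            ((A ×ˢ A).filter fun p => ¬(Q₁ j p.1 p.2 ↔ Q' j p.1 p.2)).card) <
          (∑ j : Fin n,
            ((A ×ˢ A).filter fun p => ¬(Q j p.1 p.2 ↔ Q' j p.1 p.2)).card) := by
        apply Finset.sum_lt_sum
        · intro j _
          by_cases hj : j = i
          · subst hj; exact Finset.card_le_card hsubfilter
          · rw [hQ₁j j hj]
        · exact ⟨i, Finset.mem_univ i, Finset.card_lt_card
            ((Finset.ssubset_iff_of_subset hsubfilter).mpr ⟨(u, v), hmemuv, hnotmem⟩)⟩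
      have hle₁ : (∑ j : Fin n,
          ((A ×ˢ A).filter fun p => ¬(Q₁ j p.1 p.2 ↔ Q' j p.1 p.2)).card) ≤ N := by
        omega
      have hH₁ : ∀ i' x y, x ∈ A → y ∈ A → ¬(Q₁ i' x y ↔ Q' i' x y) →
          ∃ a' b', ((a' = x ∧ b' = y) ∨ (a' = y ∧ b' = x)) ∧ b' ∉ f.choice n Q₁ A ∧
            (StrictPref (Q' i') a' b' ∨ StrictPref (Q₁ i') b' a') := by
        intro i' x y hx hy hd'
        by_cases hji : i' = i
        · subst hji
          have hcxy : ¬((x = u ∧ y = v) ∨ (x = v ∧ y = u)) := by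
            intro hc; apply hd'; rw [hQ₁i, hPdef, auxPatch_pos hc]
          have hcyx : ¬((y = u ∧ x = v) ∨ (y = v ∧ x = u)) := by
            intro hc
            apply hcxy
            rcases hc with ⟨hc1, hc2⟩ | ⟨hc1, hc2⟩
            · exact Or.inr ⟨hc2, hc1⟩
            · exact Or.inl ⟨hc2, hc1⟩
          have hQ1xy : Q₁ i' x y = Q i' x y := by
            rw [hQ₁i, hPdef, auxPatch_neg hcxy]
          have hQ1yx : Q₁ i' y x = Q i' y x := by
            rw [hQ₁i, hPdef, auxPatch_neg hcyx]
          rw [hQ1xy] at hd'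
          obtain ⟨a', b', hab', hbX', hstr'⟩ := hH i' x y hx hy hd'
          refine ⟨a', b', hab', by rw [hch]; exact hbX', ?_⟩
          rcases hstr' with h | h
          · exact Or.inl h
          · refine Or.inr ?_
            rcases hab' with ⟨rfl, rfl⟩ | ⟨rfl, rfl⟩
            · exact ⟨by rw [hQ1yx]; exact h.1, by rw [hQ1xy]; exact h.2⟩
            · exact ⟨by rw [hQ1xy]; exact h.1, by rw [hQ1yx]; exact h.2⟩
        · rw [hQ₁j i' hji] at hd'
          obtain ⟨a', b', hab', hbX', hstr'⟩ := hH i' x y hx hy hd'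
          refine ⟨a', b', hab', by rw [hch]; exact hbX', ?_⟩
          rcases hstr' with h | h
          · exact Or.inl h
          · rw [hQ₁j i' hji]; exact Or.inr h
      calc f.choice n Q' A = f.choice n Q₁ A := ih Q₁ hQ₁c hle₁ hH₁
        _ = f.choice n Q A := hch

end AuxProof

/-- Every monotonic SCF satisfying SSP satisfies set-monotonicity and hence is
weakly R̂-group-strategyproof. -/
theorem monotone_ssp_setMonotone_weakSP (f : SCF U)
    (h1 : MonotoneSCF f) (h2 : SSP f) :
    SetMonotone f ∧ WeakKellyGroupSP f := by
  have hSM : SetMonotone f := by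
    intro n R R' A i a b hRc hR'c hA ha hb hbn hoth hws
    have hrev := aux_ws_reverse (hRc i) hws
    have hbn' : b ∉ f.choice n R' A := by
      intro hmem
      exact hbn (h1 n R' R A i b a hR'c hRc hA hb ha hmem
        (fun j hj => (hoth j hj).symm) hrev)
    have hsub : f.choice n R A ⊆ A.erase b := fun x hx =>
      Finset.mem_erase.mpr ⟨fun e => hbn (e ▸ hx), f.choice_subset n R A hx⟩
    have hsub' : f.choice n R' A ⊆ A.erase b := fun x hx =>
      Finset.mem_erase.mpr ⟨fun e => hbn' (e ▸ hx), f.choice_subset n R' A hx⟩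
    have h3 := h2 n R A (A.erase b) hRc hA hsub (Finset.erase_subset _ _)
    have h4 := h2 n R' A (A.erase b) hR'c hA hsub' (Finset.erase_subset _ _)
    have h5 : f.choice n R (A.erase b) = f.choice n R' (A.erase b) := by
      apply f.iia
      intro j x hx y hy
      by_cases hji : j = i
      · subst hji
        exact aux_ws_agree hws (Finset.ne_of_mem_erase hx) (Finset.ne_of_mem_erase hy)
      · rw [hoth j hji]
    rw [← h4, ← h5, h3]
  refine ⟨hSM, ?_⟩
  rintro ⟨n, R, R', A, G, hRc, hR'c, hA, hout, hind, hne, hkelly⟩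
  set cond : Fin n → U → U → Prop := fun j x y => j ∈ G ∧
    ((x ∈ A ∧ y ∈ A ∧ StrictPref (R j) x y ∧ y ∈ f.choice n R' A ∧ x ∉ f.choice n R A) ∨
     (y ∈ A ∧ x ∈ A ∧ StrictPref (R j) y x ∧ x ∈ f.choice n R' A ∧ y ∉ f.choice n R A))
    with hconddef
  set R'' : Fin n → U → U → Prop :=
    fun j x y => if cond j x y then R' j x y else R j x y with hR''def
  have hcondsymm : ∀ j x y, cond j x y ↔ cond j y x := by
    intro j x y; rw [hconddef]; tauto
  have hR''c : ∀ j, Complete (R'' j) := by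
    intro j x y
    by_cases hc : cond j x y
    · have hc' := (hcondsymm j x y).mp hc
      rw [hR''def]
      simp only [if_pos hc, if_pos hc']
      exact hR'c j x y
    · have hc' : ¬ cond j y x := fun h => hc ((hcondsymm j x y).mpr h)
      rw [hR''def]
      simp only [if_neg hc, if_neg hc']
      exact hRc j x y
  have h2eq : f.choice n R'' A = f.choice n R A := by
    apply aux_chain f hSM n R'' hR''c A hA _ R hRc le_rfl
    intro i u v hu hv hd
    have hc : cond i u v := by
      by_contra hc
      apply hd
      rw [hR''def]
      simp only [if_neg hc]
    rw [hconddef] at hc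
    obtain ⟨hG, hp | hp⟩ := hc
    · obtain ⟨-, -, hstr, hvX', huX⟩ := hp
      exact ⟨v, u, Or.inr ⟨rfl, rfl⟩, huX, Or.inr hstr⟩
    · obtain ⟨-, -, hstr, huX', hvX⟩ := hp
      exact ⟨u, v, Or.inl ⟨rfl, rfl⟩, hvX, Or.inr hstr⟩
  have h1eq : f.choice n R'' A = f.choice n R' A := by
    apply aux_chain f hSM n R'' hR''c A hA _ R' hR'c le_rfl
    intro i u v hu hv hd
    have hnc : ¬ cond i u v := by
      intro hc
      apply hd
      rw [hR''def]
      simp only [if_pos hc]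
    have hncvu : ¬ cond i v u := fun h => hnc ((hcondsymm i u v).mpr h)
    have hR''uv : R'' i u v = R i u v := by
      rw [hR''def]; simp only [if_neg hnc]
    have hR''vu : R'' i v u = R i v u := by
      rw [hR''def]; simp only [if_neg hncvu]
    rw [hR''uv] at hd
    have hG : i ∈ G := by
      by_contra hg
      rw [hout i hg] at hd
      exact hd Iff.rfl
    by_cases hx1 : R i u v <;> by_cases hx2 : R i v u
    · have hi := hind i hG u v ⟨hx1, hx2⟩
      exact absurd (iff_of_true hi.1 hx1) hd
    · have hstr : StrictPref (R i) u v := ⟨hx1, hx2⟩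
      have hvX' : v ∉ f.choice n R' A := by
        intro hvX'
        have huX : u ∈ f.choice n R A := by
          by_contra huX
          exact hnc (by rw [hconddef]; exact ⟨hG, Or.inl ⟨hu, hv, hstr, hvX', huX⟩⟩)
        exact hx2 (hkelly i hG v hvX' u huX)
      refine ⟨u, v, Or.inl ⟨rfl, rfl⟩, hvX', Or.inl ⟨?_, ?_⟩⟩
      · rw [hR''uv]; exact hx1
      · rw [hR''vu]; exact hx2
    · have hstr : StrictPref (R i) v u := ⟨hx2, hx1⟩
      have huX' : u ∉ f.choice n R' A := by
        intro huX'
        have hvX : v ∈ f.choice n R A := by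
          by_contra hvX
          exact hnc (by rw [hconddef]; exact ⟨hG, Or.inr ⟨hv, hu, hstr, huX', hvX⟩⟩)
        exact hx1 (hkelly i hG u huX' v hvX)
      refine ⟨v, u, Or.inr ⟨rfl, rfl⟩, huX', Or.inl ⟨?_, ?_⟩⟩
      · rw [hR''vu]; exact hx2
      · rw [hR''uv]; exact hx1
    · rcases hRc i u v with h | h
      exacts [absurd h hx1, absurd h hx2]
  exact hne (h1eq.symm.trans h2eq)
end

section
/- A pairwise SCF is weakly R̂-group-strategyproof if and only if it satisfies set-monotonicity. -/
open scoped Classical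

variable {U : Type*}

section Helpers

/-- Per-voter contribution to the margin. -/
noncomputable def voterC (S : U → U → Prop) (a b : U) : ℤ :=
  (if StrictPref S a b then 1 else 0) - (if StrictPref S b a then 1 else 0)

lemma margin_eq_sum {n : ℕ} (R : Fin n → U → U → Prop) (a b : U) :
    margin R a b = ∑ j, voterC (R j) a b := by
  unfold margin voterC
  rw [Finset.card_filter, Finset.card_filter, Nat.cast_sum, Nat.cast_sum,
    ← Finset.sum_sub_distrib]
  refine Finset.sum_congr rfl fun j _ => ?_
  split_ifs <;> simp

lemma margin_swap {n : ℕ} (R : Fin n → U → U → Prop) (a b : U) :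
    margin R b a = - margin R a b := by
  unfold margin; ring

lemma margin_self {n : ℕ} (R : Fin n → U → U → Prop) (a : U) :
    margin R a a = 0 := by
  unfold margin StrictPref
  simp

lemma voterC_swap (S : U → U → Prop) (a b : U) :
    voterC S b a = - voterC S a b := by
  unfold voterC; ring

lemma voterC_indiff (S : U → U → Prop) (a b : U) (h : Indiff S a b) :
    voterC S a b = 0 := by
  have h1 : ¬ StrictPref S a b := fun hs => hs.2 h.2
  have h2 : ¬ StrictPref S b a := fun hs => hs.2 h.1
  simp [voterC, h1, h2]

lemma voterC_strict (S : U → U → Prop) (a b : U) (h : StrictPref S a b) :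
    voterC S a b = 1 := by
  have h2 : ¬ StrictPref S b a := fun hs => h.2 hs.1
  simp [voterC, h, h2]

lemma voterC_le_one (S : U → U → Prop) (a b : U) : voterC S a b ≤ 1 := by
  unfold voterC; split_ifs <;> omega

/-- Fully indifferent relation and single-comparison step relation. -/
def stepRel (x y : U) : U → U → Prop := fun u v => ¬(u = y ∧ v = x)

lemma complete_stepRel {x y : U} (hxy : x ≠ y) : Complete (stepRel x y) := by
  intro u v
  by_cases h : u = y ∧ v = x
  · right; unfold stepRel; rintro ⟨rfl, rfl⟩; exact hxy h.2.symm
  · left; exact h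

lemma strictPref_stepRel {x y : U} (hxy : x ≠ y) (u v : U) :
    StrictPref (stepRel x y) u v ↔ u = x ∧ v = y := by
  unfold StrictPref stepRel
  constructor
  · rintro ⟨h1, h2⟩
    rw [not_not] at h2
    exact ⟨h2.2, h2.1⟩
  · rintro ⟨rfl, rfl⟩
    exact ⟨fun h => hxy h.1, not_not_intro ⟨rfl, rfl⟩⟩

lemma voterC_stepRel {x y : U} (hxy : x ≠ y) (u v : U) :
    voterC (stepRel x y) u v =
      (if (u, v) = (x, y) then 1 else 0) - (if (v, u) = (x, y) then 1 else 0) := by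
  unfold voterC
  simp only [strictPref_stepRel hxy, Prod.mk.injEq]

lemma complete_snoc {n : ℕ} {R : Fin n → U → U → Prop} {S : U → U → Prop}
    (hc : ∀ j, Complete (R j)) (hS : Complete S) :
    ∀ j, Complete ((Fin.snoc R S : Fin (n + 1) → U → U → Prop) j) := by
  intro j
  by_cases hj : j = Fin.last n
  · subst hj; rw [Fin.snoc_last]; exact hS
  · obtain ⟨k, rfl⟩ := Fin.exists_castSucc_eq.mpr hj
    rw [Fin.snoc_castSucc]; exact hc k

lemma margin_snoc {n : ℕ} (R : Fin n → U → U → Prop) (S : U → U → Prop) (a b : U) :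
    margin (Fin.snoc R S) a b = margin R a b + voterC S a b := by
  rw [margin_eq_sum, margin_eq_sum, Fin.sum_univ_castSucc]
  simp [Fin.snoc_castSucc, Fin.snoc_last]

lemma margin_update {n : ℕ} {R R' : Fin n → U → U → Prop} {i : Fin n}
    (h : ∀ j, j ≠ i → R' j = R j) (u v : U) :
    margin R' u v = margin R u v + (voterC (R' i) u v - voterC (R i) u v) := by
  rw [margin_eq_sum, margin_eq_sum,
    ← Finset.sum_erase_add _ _ (Finset.mem_univ i),
    ← Finset.sum_erase_add _ _ (Finset.mem_univ i)]
  have he : ∑ j ∈ Finset.univ.erase i, voterC (R' j) u v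
      = ∑ j ∈ Finset.univ.erase i, voterC (R j) u v :=
    Finset.sum_congr rfl fun j hj => by rw [h j (Finset.ne_of_mem_erase hj)]
  rw [he]; ring

end Helpers
lemma Indiff_swap {S : U → U → Prop} {a b : U} (h : Indiff S a b) : Indiff S b a :=
  ⟨h.2, h.1⟩

lemma voterC_stepRel_self {x y : U} (hxy : x ≠ y) : voterC (stepRel x y) x y = 1 :=
  voterC_strict _ _ _ ((strictPref_stepRel hxy x y).mpr ⟨rfl, rfl⟩)

lemma voterC_stepRel_rev {x y : U} (hxy : x ≠ y) : voterC (stepRel x y) y x = -1 := by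
  rw [voterC_swap, voterC_stepRel_self hxy]

lemma voterC_stepRel_other {x y : U} (hxy : x ≠ y) (u v : U)
    (h : ¬((u = x ∧ v = y) ∨ (u = y ∧ v = x))) : voterC (stepRel x y) u v = 0 := by
  have h1 : ¬ StrictPref (stepRel x y) u v :=
    fun hs => h (Or.inl ((strictPref_stepRel hxy u v).mp hs))
  have h2 : ¬ StrictPref (stepRel x y) v u := fun hs => by
    obtain ⟨e1, e2⟩ := (strictPref_stepRel hxy v u).mp hs
    exact h (Or.inr ⟨e2, e1⟩)
  unfold voterC
  rw [if_neg h1, if_neg h2]; ring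
section Main

lemma exists_strict {n : ℕ} {R R' : Fin n → U → U → Prop} {G : Finset (Fin n)}
    (hc : ∀ j, Complete (R j))
    (hout : ∀ i, i ∉ G → R' i = R i)
    (hind : ∀ i ∈ G, ∀ a b : U, Indiff (R i) a b → Indiff (R' i) a b)
    {x y : U} (hd : margin R x y < margin R' x y) :
    ∃ i ∈ G, StrictPref (R i) y x := by
  by_contra hno
  push_neg at hno
  have hle : ∀ j : Fin n, voterC (R' j) x y ≤ voterC (R j) x y := by
    intro j
    by_cases hj : j ∈ G
    · by_cases h2 : R j y x
      · by_cases h1 : R j x y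
        · have hI := hind j hj x y ⟨h1, h2⟩
          rw [voterC_indiff _ _ _ ⟨h1, h2⟩, voterC_indiff _ _ _ hI]
        · exact absurd ⟨h2, h1⟩ (hno j hj)
      · have h1 : R j x y := ((hc j) x y).resolve_right h2
        rw [voterC_strict _ _ _ ⟨h1, h2⟩]
        exact voterC_le_one _ _ _
    · rw [hout j hj]
  have hsum : ∑ j, voterC (R' j) x y ≤ ∑ j, voterC (R j) x y :=
    Finset.sum_le_sum fun j _ => hle j
  rw [← margin_eq_sum, ← margin_eq_sum] at hsum
  omega

lemma elem_invariant (f : SCF U) (hp : PairwiseSCF f) (hsp : WeakKellyGroupSP f)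
    {n : ℕ} {R R' : Fin n → U → U → Prop} {A : Finset U} {i : Fin n} {a b : U}
    (hc : ∀ j, Complete (R j)) (hc' : ∀ j, Complete (R' j)) (hA : A.Nonempty)
    (ha : a ∈ A) (hb : b ∈ A) (hab : a ≠ b)
    (hbX : b ∉ f.choice n R A)
    (hoff : ∀ j, j ≠ i → R' j = R j)
    (hsame : ∀ x y, ¬((x = a ∧ y = b) ∨ (x = b ∧ y = a)) → (R' i x y ↔ R i x y))
    (hcase : (StrictPref (R i) b a ∧ Indiff (R' i) a b) ∨
      (Indiff (R i) a b ∧ StrictPref (R' i) a b)) :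
    f.choice n R' A = f.choice n R A := by
  by_contra hne
  -- The margin difference is exactly one step on the pair (a,b).
  have hmar : ∀ u v, margin R' u v = margin R u v + voterC (stepRel a b) u v := by
    intro u v
    rw [margin_update hoff u v]
    congr 1
    by_cases h1 : u = a ∧ v = b
    · obtain ⟨rfl, rfl⟩ := h1
      rw [voterC_stepRel_self hab]
      rcases hcase with ⟨hs, hi⟩ | ⟨hi, hs⟩
      · have e1 := voterC_strict _ _ _ hs
        have e2 := voterC_swap (R i) u v
        have e3 := voterC_indiff _ _ _ hi
        omega
      · have e1 := voterC_strict _ _ _ hs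
        have e3 := voterC_indiff _ _ _ hi
        omega
    · by_cases h2 : u = b ∧ v = a
      · obtain ⟨rfl, rfl⟩ := h2
        rw [voterC_stepRel_rev hab]
        rcases hcase with ⟨hs, hi⟩ | ⟨hi, hs⟩
        · have e1 := voterC_strict _ _ _ hs
          have e3 := voterC_indiff _ _ _ (Indiff_swap hi)
          omega
        · have e1 := voterC_strict _ _ _ hs
          have e2 := voterC_swap (R' i) v u
          have e3 := voterC_indiff _ _ _ (Indiff_swap hi)
          omega
      · have e1 : R' i u v ↔ R i u v := hsame u v (by tauto)
        have e2 : R' i v u ↔ R i v u := hsame v u (by tauto)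
        have e3 : voterC (R' i) u v = voterC (R i) u v := by
          unfold voterC StrictPref
          rw [iff_iff_eq] at e1 e2
          rw [e1, e2]
        rw [voterC_stepRel_other hab u v (by tauto), e3]
        ring
  -- Phantom-voter manipulation.
  set T : Fin (n + 1) → U → U → Prop := Fin.snoc R (stepRel a b) with hT
  set T' : Fin (n + 1) → U → U → Prop := Fin.snoc R (fun _ _ => True) with hT'
  have hcT : ∀ j, Complete (T j) := complete_snoc hc (complete_stepRel hab)
  have hcT' : ∀ j, Complete (T' j) := complete_snoc hc (fun _ _ => Or.inl trivial)
  have h1 : f.choice (n + 1) T' A = f.choice n R A := by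
    refine hp (n + 1) n T' R A hcT' hc fun u hu v hv => ?_
    rw [hT', margin_snoc]
    have : voterC (U := U) (fun _ _ => True) u v = 0 :=
      voterC_indiff _ _ _ ⟨trivial, trivial⟩
    rw [this]; ring
  have h2 : f.choice (n + 1) T A = f.choice n R' A := by
    refine hp (n + 1) n T R' A hcT hc' fun u hu v hv => ?_
    rw [hT, margin_snoc, hmar u v]
  refine hsp ⟨n + 1, T, T', A, {Fin.last n}, hcT, hcT', hA, ?_, ?_, ?_, ?_⟩
  · intro j hj
    rw [Finset.mem_singleton] at hj
    obtain ⟨k, rfl⟩ := Fin.exists_castSucc_eq.mpr hj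
    rw [hT, hT', Fin.snoc_castSucc, Fin.snoc_castSucc]
  · intro j hj u v _
    rw [Finset.mem_singleton] at hj
    subst hj
    rw [hT', Fin.snoc_last]
    exact ⟨trivial, trivial⟩
  · rw [h1, h2]
    exact fun h => hne h.symm
  · intro j hj u hu v hv
    rw [Finset.mem_singleton] at hj
    subst hj
    rw [hT, Fin.snoc_last]
    rw [h1] at hu
    intro hcon
    obtain ⟨rfl, rfl⟩ := hcon
    exact hbX hu

end Main
lemma steps_keep (f : SCF U) (hp : PairwiseSCF f) (hm : SetMonotone f)
    (A : Finset U) (hA : A.Nonempty) :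
    ∀ (M : Multiset (U × U)) (n : ℕ) (R : Fin n → U → U → Prop),
      (∀ j, Complete (R j)) →
      (∀ p ∈ M, p.1 ∈ A ∧ p.2 ∈ A ∧ p.1 ≠ p.2 ∧ p.2 ∉ f.choice n R A) →
      ∃ (m : ℕ) (S : Fin m → U → U → Prop), (∀ j, Complete (S j)) ∧
        (∀ u v : U, margin S u v =
          margin R u v + ((M.count (u, v) : ℤ) - (M.count (v, u) : ℤ))) ∧
        f.choice m S A = f.choice n R A := by
  intro M
  induction M using Multiset.induction_on with
  | empty =>
    intro n R hc _
    exact ⟨n, R, hc, fun u v => by simp, rfl⟩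
  | cons p M IH =>
    intro n R hc hval
    obtain ⟨x, y⟩ := p
    obtain ⟨hx, hy, hxy, hyX⟩ := hval (x, y) (Multiset.mem_cons_self _ _)
    set R₁ : Fin (n + 1) → U → U → Prop := Fin.snoc R (fun _ _ => True) with hR₁
    set R₂ : Fin (n + 1) → U → U → Prop := Fin.snoc R (stepRel x y) with hR₂
    have hcR₁ : ∀ j, Complete (R₁ j) := complete_snoc hc (fun _ _ => Or.inl trivial)
    have hcR₂ : ∀ j, Complete (R₂ j) := complete_snoc hc (complete_stepRel hxy)
    have hch₁ : f.choice (n + 1) R₁ A = f.choice n R A := by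
      refine hp (n + 1) n R₁ R A hcR₁ hc fun u _ v _ => ?_
      rw [hR₁, margin_snoc, voterC_indiff _ _ _ ⟨trivial, trivial⟩]
      ring
    have hws : weaklyStrengthens (R₁ (Fin.last n)) (R₂ (Fin.last n)) x y := by
      rw [hR₁, hR₂, Fin.snoc_last, Fin.snoc_last]
      refine Or.inr (Or.inr fun u v => ?_)
      unfold stepRel
      constructor
      · intro h; exact Or.inl ⟨trivial, h⟩
      · rintro (⟨-, h⟩ | ⟨rfl, rfl⟩)
        · exact h
        · rintro ⟨h1, -⟩; exact hxy h1
    have hch₂ : f.choice (n + 1) R₂ A = f.choice n R A := by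
      rw [← hch₁]
      refine hm (n + 1) R₁ R₂ A (Fin.last n) x y hcR₁ hcR₂ hA hx hy ?_ ?_ hws
      · rw [hch₁]; exact hyX
      · intro j hj
        obtain ⟨k, rfl⟩ := Fin.exists_castSucc_eq.mpr hj
        rw [hR₁, hR₂, Fin.snoc_castSucc, Fin.snoc_castSucc]
    obtain ⟨m, S, hcS, hmS, hchS⟩ := IH (n + 1) R₂ hcR₂ (by
      intro q hq
      obtain ⟨hq1, hq2, hq3, hq4⟩ := hval q (Multiset.mem_cons_of_mem hq)
      exact ⟨hq1, hq2, hq3, by rw [hch₂]; exact hq4⟩)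
    refine ⟨m, S, hcS, fun u v => ?_, by rw [hchS, hch₂]⟩
    rw [hmS u v, hR₂, margin_snoc, Multiset.count_cons, Multiset.count_cons]
    rw [voterC_stepRel hxy u v]
    push_cast
    ring

/-- A pairwise SCF is weakly R̂-group-strategyproof iff it satisfies set-monotonicity. -/
theorem pairwise_weakGroupSP_iff_setMonotone (f : SCF U) (hp : PairwiseSCF f) :
    WeakKellyGroupSP f ↔ SetMonotone f := by
  constructor
  · -- Strategyproofness implies set-monotonicity.
    intro hsp n R R' A i a b hc hc' hA ha hb hbX hoff hws
    rcases hws with h0 | h1 | h2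
    · exact f.iia n R' R A fun j u _ v _ => by
        by_cases hj : j = i
        · subst hj; exact h0 u v
        · rw [hoff j hj]
    · by_cases hRab : R i a b
      · refine f.iia n R' R A fun j u _ v _ => ?_
        by_cases hj : j = i
        · subst hj
          rw [h1 u v]
          constructor
          · rintro (h | ⟨rfl, rfl⟩)
            · exact h
            · exact hRab
          · exact Or.inl
        · rw [hoff j hj]
      · have hab : a ≠ b := by
          rintro rfl
          exact hRab (((hc i) a a).elim id id)
        have hba : R i b a := ((hc i) a b).resolve_left hRab
        refine elem_invariant f hp hsp hc hc' hA ha hb hab hbX hoff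
          (fun x y hxy => ?_) (Or.inl ⟨⟨hba, hRab⟩, ⟨(h1 a b).mpr (Or.inr ⟨rfl, rfl⟩),
            (h1 b a).mpr (Or.inl hba)⟩⟩)
        rw [h1 x y]
        constructor
        · rintro (h | ⟨rfl, rfl⟩)
          · exact h
          · exact absurd (Or.inl ⟨rfl, rfl⟩) hxy
        · exact Or.inl
    · by_cases hab : a = b
      · subst hab
        refine f.iia n R' R A fun j u _ v _ => ?_
        by_cases hj : j = i
        · subst hj
          rw [h2 u v]
          constructor
          · rintro (⟨h, -⟩ | ⟨rfl, rfl⟩)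
            · exact h
            · exact (hc _ _ _).elim id id
          · intro h
            by_cases he : u = a ∧ v = a
            · exact Or.inr he
            · exact Or.inl ⟨h, he⟩
        · rw [hoff j hj]
      · by_cases hSab : StrictPref (R i) a b
        · refine f.iia n R' R A fun j u _ v _ => ?_
          by_cases hj : j = i
          · subst hj
            rw [h2 u v]
            constructor
            · rintro (⟨h, -⟩ | ⟨rfl, rfl⟩)
              · exact h
              · exact hSab.1
            · intro h
              by_cases he : u = b ∧ v = a
              · obtain ⟨rfl, rfl⟩ := he
                exact absurd h hSab.2
              · exact Or.inl ⟨h, he⟩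
          · rw [hoff j hj]
        · have hR'ab : R' i a b := (h2 a b).mpr (Or.inr ⟨rfl, rfl⟩)
          have hR'ban : ¬ R' i b a := by
            rw [h2 b a]
            rintro (⟨-, h⟩ | ⟨h, -⟩)
            · exact h ⟨rfl, rfl⟩
            · exact hab h.symm
          by_cases hSba : StrictPref (R i) b a
          · -- two steps through the indifferent middle profile
            set Rm : Fin n → U → U → Prop :=
              Function.update R i (fun x y => R i x y ∨ (x = a ∧ y = b)) with hRm
            have hRmi : Rm i = fun x y => R i x y ∨ (x = a ∧ y = b) :=
              Function.update_self _ _ _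
            have hRmj : ∀ j, j ≠ i → Rm j = R j := fun j hj =>
              Function.update_of_ne hj _ _
            have hcm : ∀ j, Complete (Rm j) := by
              intro j
              by_cases hj : j = i
              · subst hj
                rw [hRmi]
                intro u v
                rcases hc j u v with h | h
                · exact Or.inl (Or.inl h)
                · exact Or.inr (Or.inl h)
              · rw [hRmj j hj]; exact hc j
            have step1 : f.choice n Rm A = f.choice n R A := by
              refine elem_invariant f hp hsp hc hcm hA ha hb hab hbX hRmj
                (fun x y hxy => ?_) ?_
              · rw [hRmi]
                constructor
                · rintro (h | ⟨rfl, rfl⟩)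
                  · exact h
                  · exact absurd (Or.inl ⟨rfl, rfl⟩) hxy
                · exact Or.inl
              · refine Or.inl ⟨hSba, ?_, ?_⟩
                · rw [hRmi]; exact Or.inr ⟨rfl, rfl⟩
                · rw [hRmi]; exact Or.inl hSba.1
            have step2 : f.choice n R' A = f.choice n Rm A := by
              refine elem_invariant f hp hsp hcm hc' hA ha hb hab
                (by rw [step1]; exact hbX)
                (fun j hj => by rw [hRmj j hj]; exact hoff j hj)
                (fun x y hxy => ?_) ?_
              · rw [h2 x y, hRmi]
                constructor
                · rintro (⟨h, -⟩ | ⟨rfl, rfl⟩)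
                  · exact Or.inl h
                  · exact absurd (Or.inl ⟨rfl, rfl⟩) hxy
                · rintro (h | ⟨rfl, rfl⟩)
                  · refine Or.inl ⟨h, ?_⟩
                    rintro ⟨rfl, rfl⟩
                    exact hxy (Or.inr ⟨rfl, rfl⟩)
                  · exact absurd (Or.inl ⟨rfl, rfl⟩) hxy
              · refine Or.inr ⟨?_, hR'ab, hR'ban⟩
                rw [hRmi]
                exact ⟨Or.inr ⟨rfl, rfl⟩, Or.inl hSba.1⟩
            rw [step2, step1]
          · -- indifferent case: a single step
            have hI : Indiff (R i) a b := by
              rcases (hc i) a b with h | h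
              · refine ⟨h, ?_⟩
                by_contra hba
                exact hSab ⟨h, hba⟩
              · refine ⟨?_, h⟩
                by_contra hba
                exact hSba ⟨h, hba⟩
            refine elem_invariant f hp hsp hc hc' hA ha hb hab hbX hoff
              (fun x y hxy => ?_) (Or.inr ⟨hI, hR'ab, hR'ban⟩)
            rw [h2 x y]
            constructor
            · rintro (⟨h, -⟩ | ⟨rfl, rfl⟩)
              · exact h
              · exact absurd (Or.inl ⟨rfl, rfl⟩) hxy
            · intro h
              refine Or.inl ⟨h, ?_⟩
              rintro ⟨rfl, rfl⟩
              exact hxy (Or.inr ⟨rfl, rfl⟩)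
  · -- Set-monotonicity implies group-strategyproofness.
    intro hm
    rintro ⟨n, R, R', A, G, hc, hc', hA, hout, hind, hne, hkelly⟩
    classical
    set X := f.choice n R A with hX
    set Y := f.choice n R' A with hY
    have hd_strict : ∀ u v : U, margin R u v < margin R' u v →
        ∃ i ∈ G, StrictPref (R i) v u := fun u v hd => exists_strict hc hout hind hd
    -- multiplicities
    set m1 : U × U → ℕ := fun p =>
      if margin R p.1 p.2 < margin R' p.1 p.2 ∧ p.2 ∉ X then
        (margin R' p.1 p.2 - margin R p.1 p.2).toNat else 0 with hm1
    set m2 : U × U → ℕ := fun p =>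
      if margin R p.2 p.1 < margin R' p.2 p.1 ∧ p.1 ∈ X then
        (margin R' p.2 p.1 - margin R p.2 p.1).toNat else 0 with hm2
    have hcount : ∀ (g : U × U → ℕ) (q : U × U), q.1 ∈ A → q.2 ∈ A →
        Multiset.count q ((A ×ˢ A).val.bind fun p => Multiset.replicate (g p) p) = g q := by
      intro g q hq1 hq2
      rw [Multiset.count_bind]
      have e1 : ((A ×ˢ A).val.map fun p => Multiset.count q (Multiset.replicate (g p) p))
          = (A ×ˢ A).val.map fun p => if p = q then g p else 0 :=
        Multiset.map_congr rfl fun p _ => Multiset.count_replicate _ _ _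
      rw [e1]
      have e2 : ((A ×ˢ A).val.map fun p => if p = q then g p else 0).sum
          = ∑ p ∈ A ×ˢ A, if p = q then g p else 0 := rfl
      rw [e2, Finset.sum_ite_eq']
      simp [Finset.mem_product, hq1, hq2]
    have hmem : ∀ (g : U × U → ℕ) (q : U × U),
        q ∈ ((A ×ˢ A).val.bind fun p => Multiset.replicate (g p) p) →
        q.1 ∈ A ∧ q.2 ∈ A ∧ g q ≠ 0 := by
      intro g q hq
      rw [Multiset.mem_bind] at hq
      obtain ⟨p, hp, hqp⟩ := hq
      obtain ⟨hn, rfl⟩ := Multiset.mem_replicate.mp hqp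
      have hpA : q ∈ A ×ˢ A := hp
      rw [Finset.mem_product] at hpA
      exact ⟨hpA.1, hpA.2, hn⟩
    set M1 : Multiset (U × U) := (A ×ˢ A).val.bind fun p => Multiset.replicate (m1 p) p
    set M2 : Multiset (U × U) := (A ×ˢ A).val.bind fun p => Multiset.replicate (m2 p) p
    obtain ⟨k1, S1, hcS1, hmarg1, hch1⟩ := steps_keep f hp hm A hA M1 n R hc (by
      intro q hq
      obtain ⟨hq1, hq2, hq3⟩ := hmem m1 q hq
      simp only [hm1] at hq3
      by_cases hcond : margin R q.1 q.2 < margin R' q.1 q.2 ∧ q.2 ∉ X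
      · refine ⟨hq1, hq2, ?_, hcond.2⟩
        rintro he
        have e1 := margin_self R q.2
        have e2 := margin_self R' q.2
        rw [he] at hcond
        omega
      · rw [if_neg hcond] at hq3
        exact absurd rfl hq3)
    obtain ⟨k2, S2, hcS2, hmarg2, hch2⟩ := steps_keep f hp hm A hA M2 n R' hc' (by
      intro q hq
      obtain ⟨hq1, hq2, hq3⟩ := hmem m2 q hq
      simp only [hm2] at hq3
      by_cases hcond : margin R q.2 q.1 < margin R' q.2 q.1 ∧ q.1 ∈ X
      · obtain ⟨i, hi, hst⟩ := hd_strict q.2 q.1 hcond.1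
        refine ⟨hq1, hq2, ?_, ?_⟩
        · rintro he
          have e1 := margin_self R q.2
          have e2 := margin_self R' q.2
          rw [he] at hcond
          omega
        · intro hq2Y
          exact hst.2 (hkelly i hi q.2 hq2Y q.1 hcond.2)
      · rw [if_neg hcond] at hq3
        exact absurd rfl hq3)
    have hfinal : f.choice k1 S1 A = f.choice k2 S2 A := by
      refine hp k1 k2 S1 S2 A hcS1 hcS2 fun u hu v hv => ?_
      rw [hmarg1 u v, hmarg2 u v]
      rw [hcount m1 (u, v) hu hv, hcount m1 (v, u) hv hu,
        hcount m2 (u, v) hu hv, hcount m2 (v, u) hv hu]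
      rw [hm1, hm2]
      simp only
      have hsw1 : margin R v u = - margin R u v := margin_swap R u v
      have hsw2 : margin R' v u = - margin R' u v := margin_swap R' u v
      by_cases huX : u ∈ X <;> by_cases hvX : v ∈ X <;>
        simp only [huX, hvX, not_true_eq_false, not_false_eq_true, and_true, and_false,
          if_false, if_true] <;>
        split_ifs <;> omega
    rw [hch1, hch2] at hfinal
    exact hne (hfinal.symm)
end
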